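/- arXiv:1010.0279 — 2 statements merged into one kernel-verified Lean document; each statement's English description precedes it below -/
import Mathlib

section
/- For two coupled random regular graphs with one-to-one coupling, the 4×4 matrix M with entries M_{μν} = δ_{μν} − (σ_μ / Q_μ) ∂Q_μ/∂σ_ν (where μ, ν range over {aa, ab, ba, bb}, Q_aa = Q_ba = (z_a + σ_aa^{z_a}σ_ab)/(z_a+1), Q_ab = Q_bb = (z_b + σ_ba σ_bb^{z_b})/(z_b+1)) has determinant det M = [−z_b σ_aa^{z_a} σ_ab(σ_ba σ_bb^{z_b} − 1) + z_a(σ_aa^{z_a}σ_ab − 1)(−z_b + (z_b − 1)σ_ba σ_bb^{z_b})] / [(z_a + σ_aa^{z_a}σ_ab)(z_b + σ_ba σ_bb^{z_b})]. -/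
/-!
Only eight entries of `M` are not forced to be `0` or `1`, and for that sparsity pattern the
determinant factors as `a i - (a g - b f) (c i - e h)`. The exponents `z - 1` occur only in the
products `b f` and `e h`, where they meet `z + 1` and combine to `2 z`; after that, clearing the
two denominators leaves a polynomial identity.
-/

theorem det_fin_four_of_sparse {R : Type*} [CommRing R] (a b c e f g h i : R) :
    (!![a, b, 0, 0; 0, 1, c, e; f, g, 1, 0; 0, 0, h, i] : Matrix (Fin 4) (Fin 4) R).det
      = a * i - (a * g - b * f) * (c * i - e * h) := by
  simp [Matrix.det_succ_row_zero, Fin.sum_univ_succ, Fin.succAbove]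
  ring

theorem natCast_mul_pow_sub_one_mul {R : Type*} [Semiring R] (n : ℕ) (x : R) :
    (n : R) * x ^ (n - 1) * x = n * x ^ n := by
  cases n with
  | zero => simp
  | succ n => rw [Nat.add_sub_cancel, mul_assoc, ← pow_succ]

theorem one_to_one_determinant_general
    (za zb : ℕ)
    (σaa σab σba σbb : ℝ)
    (hDa : (za : ℝ) + σaa ^ za * σab ≠ 0)
    (hDb : (zb : ℝ) + σba * σbb ^ zb ≠ 0)
    (M : Matrix (Fin 4) (Fin 4) ℝ)
    (hM : M = !![
      ((za : ℝ) + σaa ^ za * σab - za * σaa ^ za * σab) / ((za : ℝ) + σaa ^ za * σab),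
        -(σaa ^ (za + 1)) / ((za : ℝ) + σaa ^ za * σab), 0, 0;
      0, 1, -(σab * σbb ^ zb) / ((zb : ℝ) + σba * σbb ^ zb),
        -((zb : ℝ) * σab * σba * σbb ^ (zb - 1)) / ((zb : ℝ) + σba * σbb ^ zb);
      -((za : ℝ) * σaa ^ (za - 1) * σab * σba) / ((za : ℝ) + σaa ^ za * σab),
        -(σaa ^ za * σba) / ((za : ℝ) + σaa ^ za * σab), 1, 0;
      0, 0, -(σbb ^ (zb + 1)) / ((zb : ℝ) + σba * σbb ^ zb),
        ((zb : ℝ) + σba * σbb ^ zb - zb * σba * σbb ^ zb) / ((zb : ℝ) + σba * σbb ^ zb)]) :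
    M.det = (-(zb : ℝ) * σaa ^ za * σab * (σba * σbb ^ zb - 1)
        + (za : ℝ) * (σaa ^ za * σab - 1) * (-(zb : ℝ) + ((zb : ℝ) - 1) * (σba * σbb ^ zb)))
      / (((za : ℝ) + σaa ^ za * σab) * ((zb : ℝ) + σba * σbb ^ zb)) := by
  have hbf : σaa ^ (za + 1) * ((za : ℝ) * σaa ^ (za - 1) * σab * σba)
      = za * σaa ^ za * σaa ^ za * σab * σba := by
    linear_combination σaa ^ za * σab * σba * natCast_mul_pow_sub_one_mul za σaa
  have heh : (zb : ℝ) * σab * σba * σbb ^ (zb - 1) * σbb ^ (zb + 1)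
      = zb * σab * σba * σbb ^ zb * σbb ^ zb := by
    linear_combination σab * σba * σbb ^ zb * natCast_mul_pow_sub_one_mul zb σbb
  rw [hM, det_fin_four_of_sparse]
  simp only [div_mul_div_comm, neg_mul_neg, hbf, heh]
  field_simp
  ring

/-- For two coupled random regular graphs with one-to-one coupling,
the 4×4 matrix `M` with entries `M_{μν} = δ_{μν} − (σ_μ / Q_μ) ∂Q_μ/∂σ_ν`
(indices ordered `aa, ab, ba, bb`, with `Q_aa = Q_ba = (z_a + σ_aa^{z_a} σ_ab)/(z_a+1)`
and `Q_ab = Q_bb = (z_b + σ_ba σ_bb^{z_b})/(z_b+1)`) has determinant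
`[−z_b σ_aa^{z_a} σ_ab(σ_ba σ_bb^{z_b} − 1)
  + z_a(σ_aa^{z_a} σ_ab − 1)(−z_b + (z_b−1) σ_ba σ_bb^{z_b})]
 / [(z_a + σ_aa^{z_a} σ_ab)(z_b + σ_ba σ_bb^{z_b})]`. -/
theorem one_to_one_determinant
    (za zb : ℕ) (hza : 1 ≤ za) (hzb : 1 ≤ zb)
    (σaa σab σba σbb : ℝ)
    (hDa : (za : ℝ) + σaa ^ za * σab ≠ 0)
    (hDb : (zb : ℝ) + σba * σbb ^ zb ≠ 0)
    (M : Matrix (Fin 4) (Fin 4) ℝ)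
    (hM : M = !![
      ((za : ℝ) + σaa ^ za * σab - za * σaa ^ za * σab) / ((za : ℝ) + σaa ^ za * σab),
        -(σaa ^ (za + 1)) / ((za : ℝ) + σaa ^ za * σab), 0, 0;
      0, 1, -(σab * σbb ^ zb) / ((zb : ℝ) + σba * σbb ^ zb),
        -((zb : ℝ) * σab * σba * σbb ^ (zb - 1)) / ((zb : ℝ) + σba * σbb ^ zb);
      -((za : ℝ) * σaa ^ (za - 1) * σab * σba) / ((za : ℝ) + σaa ^ za * σab),
        -(σaa ^ za * σba) / ((za : ℝ) + σaa ^ za * σab), 1, 0;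
      0, 0, -(σbb ^ (zb + 1)) / ((zb : ℝ) + σba * σbb ^ zb),
        ((zb : ℝ) + σba * σbb ^ zb - zb * σba * σbb ^ zb) / ((zb : ℝ) + σba * σbb ^ zb)]) :
    M.det = (-(zb : ℝ) * σaa ^ za * σab * (σba * σbb ^ zb - 1)
        + (za : ℝ) * (σaa ^ za * σab - 1) * (-(zb : ℝ) + ((zb : ℝ) - 1) * (σba * σbb ^ zb)))
      / (((za : ℝ) + σaa ^ za * σab) * ((zb : ℝ) + σba * σbb ^ zb)) :=
  one_to_one_determinant_general za zb σaa σab σba σbb hDa hDb M hM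
end

section
/- For the two-coupled-regular-graph system with one-to-one coupling (intra-degrees z_a, z_b ≥ 1), the 2×2 mean matrix of the toppling branch distributions, computed from U_a(τ_a,τ_b) = (τ_a+z_a)^{z_a}(τ_b+z_b)/((z_a+1)^{z_a}(z_b+1)) and U_b(τ_a,τ_b) = (τ_a+z_a)(τ_b+z_b)^{z_b}/((z_a+1)(z_b+1)^{z_b}), is M = [[z_a/(z_a+1), 1/(z_b+1)], [1/(z_a+1), z_b/(z_b+1)]], where M_{11} = ∂_{τ_a}U_a(1,1), M_{12} = ∂_{τ_b}U_a(1,1), M_{21} = ∂_{τ_a}U_b(1,1), M_{22} = ∂_{τ_b}U_b(1,1); moreover the column sums of M^T (i.e., M_{11}+M_{21} and M_{12}+M_{22}) are both 1, so 1 is an eigenvalue of M and the two-type toppling branching process is exactly critical. -/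
/-!
Each entry of the mean matrix is the logarithmic derivative `n / (1 + c)` of a normalized factor
`(τ + c) ^ n / (1 + c) ^ n` at `τ = 1`; the other factor of `U_a` or `U_b` is `1` there. A node of
either type has `z` neighbours of its own type and one of the other, so every column of the mean
matrix sums to `z / (z + 1) + 1 / (z + 1) = 1`, and the all-ones row vector is a left eigenvector
for the eigenvalue `1`.
-/

open Matrix

theorem deriv_add_const_pow_div_pow (a c : ℝ) (n : ℕ) (hac : a + c ≠ 0) :
    deriv (fun x : ℝ => (x + c) ^ n / (a + c) ^ n) a = n / (a + c) := by
  have h : HasDerivAt (fun x : ℝ => (x + c) ^ n / (a + c) ^ n)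
      (n * (a + c) ^ (n - 1) / (a + c) ^ n) a := by
    simpa using (((hasDerivAt_id a).add_const c).pow n).div_const ((a + c) ^ n)
  rw [h.deriv]
  cases n with
  | zero => simp
  | succ m =>
    rw [Nat.add_sub_cancel, pow_succ]
    field_simp

theorem exists_vecMul_eq_self_of_sum_col_eq_one {ι R : Type*} [Fintype ι] [Nonempty ι]
    [Semiring R] [Nontrivial R] {M : Matrix ι ι R} (hM : ∀ j, ∑ i, M i j = 1) :
    ∃ v : ι → R, v ≠ 0 ∧ v ᵥ* M = v :=
  ⟨fun _ => 1, Function.ne_iff.mpr ⟨Classical.arbitrary ι, one_ne_zero⟩,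
    funext fun j => by simp [vecMul, dotProduct, hM j]⟩

section OneToOneCoupling

variable (za zb : ℕ)

/-- The generating function `U_a(τ_a, τ_b)` of the branch distribution of a type-`a` toppling. -/
noncomputable def branchGenA (τa τb : ℝ) : ℝ :=
  (τa + za) ^ za * (τb + zb) / (((za : ℝ) + 1) ^ za * ((zb : ℝ) + 1))

/-- The generating function `U_b(τ_a, τ_b)` of the branch distribution of a type-`b` toppling. -/
noncomputable def branchGenB (τa τb : ℝ) : ℝ :=
  (τa + za) * (τb + zb) ^ zb / (((za : ℝ) + 1) * ((zb : ℝ) + 1) ^ zb)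

theorem deriv_branchGenA_left :
    deriv (fun τa => branchGenA za zb τa 1) 1 = za / (za + 1) := by
  have h : (fun τa => branchGenA za zb τa 1) = fun τa : ℝ => (τa + za) ^ za / (1 + za) ^ za := by
    funext τa
    unfold branchGenA
    field_simp
    ring
  rw [h, deriv_add_const_pow_div_pow _ _ _ (by positivity), add_comm]

theorem deriv_branchGenA_right :
    deriv (fun τb => branchGenA za zb 1 τb) 1 = 1 / (zb + 1) := by
  have h : (fun τb => branchGenA za zb 1 τb) = fun τb : ℝ => (τb + zb) ^ 1 / (1 + zb) ^ 1 := by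
    funext τb
    unfold branchGenA
    field_simp
    ring
  rw [h, deriv_add_const_pow_div_pow _ _ _ (by positivity), add_comm, Nat.cast_one]

theorem deriv_branchGenB_left :
    deriv (fun τa => branchGenB za zb τa 1) 1 = 1 / (za + 1) := by
  have h : (fun τa => branchGenB za zb τa 1) = fun τa : ℝ => (τa + za) ^ 1 / (1 + za) ^ 1 := by
    funext τa
    unfold branchGenB
    field_simp
    ring
  rw [h, deriv_add_const_pow_div_pow _ _ _ (by positivity), add_comm, Nat.cast_one]

theorem deriv_branchGenB_right :
    deriv (fun τb => branchGenB za zb 1 τb) 1 = zb / (zb + 1) := by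
  have h : (fun τb => branchGenB za zb 1 τb) = fun τb : ℝ => (τb + zb) ^ zb / (1 + zb) ^ zb := by
    funext τb
    unfold branchGenB
    field_simp
    ring
  rw [h, deriv_add_const_pow_div_pow _ _ _ (by positivity), add_comm]

end OneToOneCoupling

theorem one_to_one_mean_matrix_critical_general
    (za zb : ℕ)
    (M : Matrix (Fin 2) (Fin 2) ℝ)
    (hM : M = !![(za : ℝ) / (za + 1), 1 / ((zb : ℝ) + 1);
                 1 / ((za : ℝ) + 1), (zb : ℝ) / (zb + 1)]) :
    (deriv (fun τa : ℝ =>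
        (τa + za) ^ za * ((1 : ℝ) + zb) / (((za : ℝ) + 1) ^ za * ((zb : ℝ) + 1))) 1
      = M 0 0) ∧
    (deriv (fun τb : ℝ =>
        ((1 : ℝ) + za) ^ za * (τb + zb) / (((za : ℝ) + 1) ^ za * ((zb : ℝ) + 1))) 1
      = M 0 1) ∧
    (deriv (fun τa : ℝ =>
        (τa + za) * ((1 : ℝ) + zb) ^ zb / (((za : ℝ) + 1) * ((zb : ℝ) + 1) ^ zb)) 1
      = M 1 0) ∧
    (deriv (fun τb : ℝ =>
        ((1 : ℝ) + za) * (τb + zb) ^ zb / (((za : ℝ) + 1) * ((zb : ℝ) + 1) ^ zb)) 1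
      = M 1 1) ∧
    (M 0 0 + M 1 0 = 1 ∧ M 0 1 + M 1 1 = 1) ∧
    (∃ v : Fin 2 → ℝ, v ≠ 0 ∧ Matrix.vecMul v M = v) := by
  have hcol : ∀ z : ℕ, (z : ℝ) / (z + 1) + 1 / (z + 1) = 1 := fun z => by field_simp
  have hsum : ∀ j, ∑ i, M i j = 1 := by
    intro j
    fin_cases j
    · simpa [hM] using hcol za
    · simpa [hM, add_comm] using hcol zb
  subst hM
  exact ⟨deriv_branchGenA_left za zb, deriv_branchGenA_right za zb,
    deriv_branchGenB_left za zb, deriv_branchGenB_right za zb,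
    ⟨by simpa [Fin.sum_univ_two] using hsum 0, by simpa [Fin.sum_univ_two] using hsum 1⟩,
    exists_vecMul_eq_self_of_sum_col_eq_one hsum⟩

/-- For the two-coupled-regular-graph system with one-to-one coupling
(intra-degrees `z_a, z_b ≥ 1`), the 2×2 mean matrix of the toppling branch
distributions, computed from
`U_a(τ_a,τ_b) = (τ_a+z_a)^{z_a}(τ_b+z_b)/((z_a+1)^{z_a}(z_b+1))` and
`U_b(τ_a,τ_b) = (τ_a+z_a)(τ_b+z_b)^{z_b}/((z_a+1)(z_b+1)^{z_b})`, is
`M = [[z_a/(z_a+1), 1/(z_b+1)], [1/(z_a+1), z_b/(z_b+1)]]`; the column sums of `Mᵀ`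
are both `1`, so `1` is an eigenvalue of `M`: the two-type toppling branching process
is exactly critical. -/
theorem one_to_one_mean_matrix_critical
    (za zb : ℕ) (hza : 1 ≤ za) (hzb : 1 ≤ zb)
    (M : Matrix (Fin 2) (Fin 2) ℝ)
    (hM : M = !![(za : ℝ) / (za + 1), 1 / ((zb : ℝ) + 1);
                 1 / ((za : ℝ) + 1), (zb : ℝ) / (zb + 1)]) :
    (deriv (fun τa : ℝ =>
        (τa + za) ^ za * ((1 : ℝ) + zb) / (((za : ℝ) + 1) ^ za * ((zb : ℝ) + 1))) 1
      = M 0 0) ∧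
    (deriv (fun τb : ℝ =>
        ((1 : ℝ) + za) ^ za * (τb + zb) / (((za : ℝ) + 1) ^ za * ((zb : ℝ) + 1))) 1
      = M 0 1) ∧
    (deriv (fun τa : ℝ =>
        (τa + za) * ((1 : ℝ) + zb) ^ zb / (((za : ℝ) + 1) * ((zb : ℝ) + 1) ^ zb)) 1
      = M 1 0) ∧
    (deriv (fun τb : ℝ =>
        ((1 : ℝ) + za) * (τb + zb) ^ zb / (((za : ℝ) + 1) * ((zb : ℝ) + 1) ^ zb)) 1
      = M 1 1) ∧
    (M 0 0 + M 1 0 = 1 ∧ M 0 1 + M 1 1 = 1) ∧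
    (∃ v : Fin 2 → ℝ, v ≠ 0 ∧ Matrix.vecMul v M = v) :=
  one_to_one_mean_matrix_critical_general za zb M hM
end
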